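/- The final lfg H-coalgebra is a subcoalgebra of the final H-coalgebra: the unique coalgebra homomorphism from the final lfg coalgebra to the final coalgebra is a monomorphism. -/

import Mathlib

open CategoryTheory CategoryTheory.Limits

universe v u

namespace LFF

variable {C : Type u} [Category.{v} C]

/-- An object is finitely presentable if its hom-functor preserves filtered colimits. -/
def IsFP (X : C) : Prop :=
  ∀ (J : Type v) [SmallCategory J] [IsFiltered J] (F : J ⥤ C)
    (c : Cocone F), Nonempty (IsColimit c) →
    Nonempty (IsColimit ((coyoneda.obj (Opposite.op X)).mapCocone c))

/-- An object is finitely generated if its hom-functor preserves filtered colimits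
of diagrams all of whose connecting morphisms are monomorphisms. -/
def IsFG (X : C) : Prop :=
  ∀ (J : Type v) [SmallCategory J] [IsFiltered J] (F : J ⥤ C),
    (∀ ⦃i j : J⦄ (f : i ⟶ j), Mono (F.map f)) →
    ∀ (c : Cocone F), Nonempty (IsColimit c) →
    Nonempty (IsColimit ((coyoneda.obj (Opposite.op X)).mapCocone c))

/-- A category is locally finitely presentable if it is cocomplete, the finitely
presentable objects are essentially small, and every object is a filtered colimit
of finitely presentable objects. -/
def IsLFP (C : Type u) [Category.{v} C] : Prop :=
  HasColimits C ∧
  EssentiallySmall.{v} (ObjectProperty.FullSubcategory (fun X : C => IsFP X)) ∧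
  ∀ X : C, ∃ (J : Type v) (_ : SmallCategory J) (_ : IsFiltered J)
    (F : J ⥤ C) (c : Cocone F),
      (∀ j, IsFP (F.obj j)) ∧ Nonempty (IsColimit c) ∧ Nonempty (c.pt ≅ X)

/-- A functor is finitary if it preserves filtered colimits. -/
def IsFinitary (H : C ⥤ C) : Prop :=
  ∀ (J : Type v) [SmallCategory J] [IsFiltered J], Nonempty (PreservesColimitsOfShape J H)

/-- An object is a strict initial object if it is initial and every morphism into it
is an isomorphism. -/
def IsStrictInitial (X : C) : Prop :=
  Nonempty (IsInitial X) ∧ ∀ (Y : C) (f : Y ⟶ X), IsIso f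

/-- A monomorphism is non-empty if its domain is not a strict initial object;
a functor preserves non-empty monos if it maps them to monos. -/
def PreservesNonemptyMonos (H : C ⥤ C) : Prop :=
  ∀ ⦃X Y : C⦄ (m : X ⟶ Y), Mono m → ¬ IsStrictInitial X → Mono (H.map m)

/-- A coalgebra is locally finitely generated (lfg) if every morphism from a finitely
generated object into its carrier factors through a coalgebra homomorphism from a
coalgebra with finitely generated carrier. -/
def IsLFGCoalgebra (H : C ⥤ C) (X : Endofunctor.Coalgebra H) : Prop :=
  ∀ (S : C), IsFG S → ∀ f : S ⟶ X.V,
    ∃ (P : Endofunctor.Coalgebra H) (h : P ⟶ X) (f' : S ⟶ P.V),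
      IsFG P.V ∧ f' ≫ h.f = f

/-- An algebra is fg-iterative if every flat equation morphism `e : X ⟶ HX + A` with
`X` finitely generated has a unique solution. -/
def IsFGIterative [HasBinaryCoproducts C] (H : C ⥤ C) (A : Endofunctor.Algebra H) : Prop :=
  ∀ (X : C), IsFG X → ∀ e : X ⟶ (H.obj X ⨿ A.a),
    ∃! s : X ⟶ A.a,
      s = e ≫ coprod.map (H.map s) (𝟙 A.a) ≫ coprod.desc A.str (𝟙 A.a)

end LFF

/-!
In an lfp category every morphism factors as a strong epi followed by a mono. The image is
built by coequalizing, ω times over, all pairs of maps out of a small family of finitely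
presentable generators that become equal in the codomain; a pair identified in the colimit
already lives at a finite stage, since its domain is finitely presentable, and is merged at the
next one. Finitely generated objects are closed under strong quotients, and when `H` maps the
mono to a mono, the diagonal fill-in puts a coalgebra structure on the image.

To see that `L ⟶ T` is monic, test it on `a b : S ⟶ L` with `S` finitely presentable and not
strict initial. Both maps factor through one fg coalgebra `P ⟶ L`; the image `E` of `P ⟶ T` is
again an fg coalgebra, so by finality of `L` among lfg coalgebras `P ⟶ L` factors through
`P ⟶ E`, in which `a` and `b` already agree.
-/

namespace LFF

variable {C : Type u} [Category.{v} C]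

theorem isFP_iff_isFinitelyPresentable {X : C} : IsFP X ↔ IsFinitelyPresentable.{v} X := by
  rw [isFinitelyPresentable_iff_preservesFilteredColimitsOfSize]
  refine ⟨fun h => ⟨fun J _ _ => ⟨fun {F} => ⟨fun {c} hc => h J F c ⟨hc⟩⟩⟩⟩, ?_⟩
  rintro _ J _ _ F c ⟨hc⟩
  exact ⟨isColimitOfPreserves _ hc⟩

theorem IsFP.isFinitelyPresentable_shrink {X : C} (h : IsFP X) :
    IsFinitelyPresentable.{0} X := by
  have := isFinitelyPresentable_iff_preservesFilteredColimitsOfSize.mp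
    (isFP_iff_isFinitelyPresentable.mp h)
  rw [isFinitelyPresentable_iff_preservesFilteredColimitsOfSize]
  exact preservesSmallestFilteredColimits_of_preservesFilteredColimits _

theorem IsFP.isFG {X : C} (h : IsFP X) : IsFG X := fun J _ _ F _ c hc => h J F c hc

theorem IsFP.coprod [HasBinaryCoproducts C] {X Y : C} (hX : IsFP X) (hY : IsFP Y) :
    IsFP (X ⨿ Y) := by
  have := Cardinal.fact_isRegular_aleph0
  have (k : Discrete WalkingPair) : IsFinitelyPresentable.{v} ((pair X Y).obj k) := by
    rcases k with ⟨_ | _⟩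
    exacts [isFP_iff_isFinitelyPresentable.mp hX, isFP_iff_isFinitelyPresentable.mp hY]
  exact isFP_iff_isFinitelyPresentable.mpr <| isCardinalPresentable_of_isColimit _
    (colimit.isColimit (pair X Y)) Cardinal.aleph0.{v} (hasCardinalLT_of_finite _ _ le_rfl)

theorem IsLFP.isSeparating (hC : IsLFP C) : ObjectProperty.IsSeparating (IsFP (C := C)) := by
  intro X Y f g hfg
  obtain ⟨J, _, _, F, c, hF, ⟨hc⟩, ⟨e⟩⟩ := hC.2.2 X
  rw [← cancel_epi e.hom]
  exact hc.hom_ext fun j => by simpa using hfg _ (hF j) (c.ι.app j ≫ e.hom)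

theorem IsLFP.exists_separating_family (hC : IsLFP C) :
    ∃ (σ : Type v) (G : σ → C),
      (∀ s, IsFP (G s)) ∧ (ObjectProperty.ofObj G).IsSeparating := by
  have := hC.2.1
  let e := equivSmallModel (ObjectProperty.FullSubcategory (IsFP (C := C)))
  refine ⟨_, fun s => (e.inverse.obj s).obj, fun s => (e.inverse.obj s).property, ?_⟩
  intro X Y f g hfg
  refine hC.isSeparating f g fun S hS h => ?_
  let i : S ≅ (e.inverse.obj (e.functor.obj ⟨S, hS⟩)).obj :=
    (ObjectProperty.ι _).mapIso (e.unitIso.app ⟨S, hS⟩)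
  calc h ≫ f = i.hom ≫ (i.inv ≫ h) ≫ f := by simp
    _ = i.hom ≫ (i.inv ≫ h) ≫ g := by
      rw [hfg _ (ObjectProperty.ofObj_apply _ _) (i.inv ≫ h)]
    _ = h ≫ g := by simp

theorem mono_ι_of_isColimit (hsep : ObjectProperty.IsSeparating (IsFP (C := C)))
    {J : Type v} [SmallCategory J] [IsFiltered J] {F : J ⥤ C}
    (hF : ∀ ⦃i j : J⦄ (f : i ⟶ j), Mono (F.map f))
    {c : Cocone F} (hc : IsColimit c) (j : J) :
    Mono (c.ι.app j) := by
  rw [hsep.mono_iff]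
  intro S hS a b hab
  have := isFP_iff_isFinitelyPresentable.mp hS
  obtain ⟨k, f, g, hfg⟩ := IsFinitelyPresentable.exists_eq_of_isColimit hc a b hab
  have hcoeq : a ≫ F.map (f ≫ IsFiltered.coeqHom f g) =
      b ≫ F.map (f ≫ IsFiltered.coeqHom f g) := by
    conv_rhs => rw [IsFiltered.coeq_condition f g]
    simp only [F.map_comp, reassoc_of% hfg]
  exact (cancel_mono _).mp hcoeq

theorem IsFG.of_strongEpi (hsep : ObjectProperty.IsSeparating (IsFP (C := C)))
    {X Y : C} (e : X ⟶ Y) [StrongEpi e] (hX : IsFG X) : IsFG Y := by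
  intro J _ _ F hF c ⟨hc⟩
  obtain ⟨hXc⟩ := hX J F hF c ⟨hc⟩
  refine ⟨Types.FilteredColimit.isColimitOf _ _ (fun g => ?_) (fun i j x y hxy => ?_)⟩
  · obtain ⟨j, t, ht⟩ := Types.jointly_surjective_of_isColimit hXc (e ≫ g)
    have := mono_ι_of_isColimit hsep hF hc j
    have sq : CommSq t e (c.ι.app j) g := ⟨ht⟩
    exact ⟨j, sq.lift, sq.fac_right.symm⟩
  · have hexy : (e ≫ x) ≫ c.ι.app i = (e ≫ y) ≫ c.ι.app j := by
      rw [Category.assoc, Category.assoc]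
      exact congrArg (e ≫ ·) hxy
    obtain ⟨k, f, g, hfg⟩ := (Types.FilteredColimit.isColimit_eq_iff _ hXc).mp hexy
    exact ⟨k, f, g, (cancel_epi e).mp (by simpa using hfg)⟩

theorem strongEpi_ι_zero_of_isColimit {F : ℕ ⥤ C}
    (hF : ∀ n : ℕ, StrongEpi (F.map (homOfLE (n.le_add_right 1))))
    {c : Cocone F} (hc : IsColimit c) : StrongEpi (c.ι.app 0) := by
  have : Epi (c.ι.app 0) := ⟨fun φ ψ h => hc.hom_ext fun n => by
    induction n with
    | zero => exact h
    | succ n ih =>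
      rwa [← cancel_epi (F.map (homOfLE (n.le_add_right 1))), ← Category.assoc, c.w,
        ← Category.assoc, c.w]⟩
  refine StrongEpi.mk' fun A B z _ u v sq => ?_
  have hlift (n : ℕ) : ∃ l : F.obj n ⟶ A, l ≫ z = c.ι.app n ≫ v := by
    induction n with
    | zero => exact ⟨u, sq.w⟩
    | succ n ih =>
      obtain ⟨l, hl⟩ := ih
      have sq' : CommSq l (F.map (homOfLE (n.le_add_right 1))) z (c.ι.app (n + 1) ≫ v) :=
        ⟨by rw [hl, ← Category.assoc, c.w]⟩
      exact ⟨sq'.lift, sq'.fac_right⟩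
  choose l hl using hlift
  let d : c.pt ⟶ A := hc.desc ⟨A, NatTrans.ofSequence l fun n => by
    rw [← cancel_mono z]
    simp [hl]⟩
  have hd (n : ℕ) : c.ι.app n ≫ d = l n := hc.fac _ n
  exact ⟨⟨{ l := d,
             fac_left := (hd 0).trans ((cancel_mono z).mp ((hl 0).trans sq.w.symm)),
             fac_right := hc.hom_ext fun n => by rw [reassoc_of% hd, hl] }⟩⟩

section IdentifyPairs

variable [HasColimits C] {σ : Type v} (G : σ → C) {Y : C}

def IdentifiedPairs (A : Over Y) : Type v :=
  Σ s : σ, {p : (G s ⟶ A.left) × (G s ⟶ A.left) // p.1 ≫ A.hom = p.2 ≫ A.hom}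

noncomputable def identifyPairs (A : Over Y) : Over Y :=
  Over.mk (coequalizer.desc (f := Sigma.desc fun i : IdentifiedPairs G A => i.2.1.1)
    (g := Sigma.desc fun i : IdentifiedPairs G A => i.2.1.2) A.hom
    (Sigma.hom_ext _ _ fun i => by simpa using i.2.2))

noncomputable def toIdentifyPairs (A : Over Y) : A ⟶ identifyPairs G A :=
  Over.homMk (coequalizer.π _ _) (coequalizer.π_desc _ _)

instance (A : Over Y) : StrongEpi (toIdentifyPairs G A).left :=
  inferInstanceAs (StrongEpi (coequalizer.π (Sigma.desc fun i : IdentifiedPairs G A => i.2.1.1)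
    (Sigma.desc fun i : IdentifiedPairs G A => i.2.1.2)))

theorem toIdentifyPairs_identifies (A : Over Y) (i : IdentifiedPairs G A) :
    i.2.1.1 ≫ (toIdentifyPairs G A).left = i.2.1.2 ≫ (toIdentifyPairs G A).left := by
  have := Sigma.ι _ i ≫= coequalizer.condition
    (Sigma.desc fun i : IdentifiedPairs G A => i.2.1.1)
    (Sigma.desc fun i : IdentifiedPairs G A => i.2.1.2)
  simp only [Sigma.ι_desc_assoc] at this
  exact this

noncomputable def identifyPairsSeq (A : Over Y) : ℕ → Over Y
  | 0 => A
  | n + 1 => identifyPairs G (identifyPairsSeq A n)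

noncomputable def identifyPairsChain (A : Over Y) : ℕ ⥤ Over Y :=
  Functor.ofSequence fun n => toIdentifyPairs G (identifyPairsSeq G A n)

theorem identifyPairsChain_map_succ (A : Over Y) (n : ℕ) :
    (identifyPairsChain G A).map (homOfLE (n.le_add_right 1)) =
      (toIdentifyPairs G ((identifyPairsChain G A).obj n) :
        _ ⟶ (identifyPairsChain G A).obj (n + 1)) :=
  Functor.ofSequence_map_homOfLE_succ _ n

theorem strongEpi_colimit_ι_zero_left (A : Over Y) :
    StrongEpi (colimit.ι (identifyPairsChain G A) 0).left :=
  strongEpi_ι_zero_of_isColimit (c := (Over.forget Y).mapCocone (colimit.cocone _))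
    (fun n => by
      rw [Functor.comp_map, Over.forget_map, identifyPairsChain_map_succ]
      exact inferInstanceAs (StrongEpi (toIdentifyPairs G (identifyPairsSeq G A n)).left))
    (isColimitOfPreserves (Over.forget Y) (colimit.isColimit _))

theorem identifyPairsChain_map_succ_identifies (A : Over Y) (n : ℕ) {s : σ}
    (a b : G s ⟶ ((identifyPairsChain G A).obj n).left)
    (h : a ≫ ((identifyPairsChain G A).obj n).hom =
      b ≫ ((identifyPairsChain G A).obj n).hom) :
    a ≫ ((identifyPairsChain G A).map (homOfLE (n.le_add_right 1))).left =
      b ≫ ((identifyPairsChain G A).map (homOfLE (n.le_add_right 1))).left := by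
  have := toIdentifyPairs_identifies G ((identifyPairsChain G A).obj n) ⟨s, (a, b), h⟩
  rwa [← identifyPairsChain_map_succ] at this

theorem mono_colimit_identifyPairsChain_hom (hG : ∀ s, IsFP (G s))
    (hsep : (ObjectProperty.ofObj G).IsSeparating) (A : Over Y) :
    Mono (colimit (identifyPairsChain G A)).hom := by
  set F := identifyPairsChain G A
  have hc := isColimitOfPreserves (Over.forget Y) (colimit.isColimit F)
  rw [hsep.mono_iff]
  rintro _ ⟨s⟩ a b hab
  have := (hG s).isFinitelyPresentable_shrink
  obtain ⟨n₁, a₁ : G s ⟶ (F.obj n₁).left,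
      ha₁ : a₁ ≫ (colimit.ι F n₁).left = a⟩ :=
    IsFinitelyPresentable.exists_hom_of_isColimit hc a
  obtain ⟨n₂, b₁ : G s ⟶ (F.obj n₂).left,
      hb₁ : b₁ ≫ (colimit.ι F n₂).left = b⟩ :=
    IsFinitelyPresentable.exists_hom_of_isColimit hc b
  let n := max n₁ n₂
  let a₂ := a₁ ≫ (F.map (homOfLE (le_max_left n₁ n₂))).left
  let b₂ := b₁ ≫ (F.map (homOfLE (le_max_right n₁ n₂))).left
  have ha₂ : a₂ ≫ (colimit.ι F n).left = a := by
    rw [← ha₁, Category.assoc, ← Over.comp_left, colimit.w]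
  have hb₂ : b₂ ≫ (colimit.ι F n).left = b := by
    rw [← hb₁, Category.assoc, ← Over.comp_left, colimit.w]
  have hpair : a₂ ≫ (F.obj n).hom = b₂ ≫ (F.obj n).hom := by
    rw [← Over.w (colimit.ι F n), reassoc_of% ha₂, reassoc_of% hb₂, hab]
  rw [← ha₂, ← hb₂, ← colimit.w F (homOfLE (n.le_add_right 1)), Over.comp_left,
    reassoc_of% identifyPairsChain_map_succ_identifies G A n a₂ b₂ hpair]

end IdentifyPairs

theorem hasStrongEpiMonoFactorisations_of_isSeparating [HasColimits C]
    {σ : Type v} {G : σ → C} (hG : ∀ s, IsFP (G s))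
    (hsep : (ObjectProperty.ofObj G).IsSeparating) :
    HasStrongEpiMonoFactorisations C :=
  .mk fun f =>
    { I := (colimit (identifyPairsChain G (Over.mk f))).left
      m := (colimit (identifyPairsChain G (Over.mk f))).hom
      m_mono := mono_colimit_identifyPairsChain_hom G hG hsep _
      e := (colimit.ι (identifyPairsChain G (Over.mk f)) 0).left
      fac := Over.w (colimit.ι _ 0)
      e_strong_epi := strongEpi_colimit_ι_zero_left G (Over.mk f) }

theorem IsLFP.hasStrongEpiMonoFactorisations (hC : IsLFP C) :
    HasStrongEpiMonoFactorisations C := by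
  obtain ⟨σ, G, hG, hsep⟩ := hC.exists_separating_family
  have := hC.1
  exact hasStrongEpiMonoFactorisations_of_isSeparating hG hsep

section Coalgebra

open Endofunctor

variable {H : C ⥤ C} {R T : Coalgebra H} (w : R ⟶ T) (F : StrongEpiMonoFactorisation w.f)

theorem imageCoalgebra_commSq :
    CommSq (R.str ≫ H.map F.e) F.e (H.map F.m) (F.m ≫ T.str) :=
  ⟨by rw [Category.assoc, ← H.map_comp, F.fac, w.h, MonoFactorisation.fac_assoc]⟩

variable [Mono (H.map F.m)]

noncomputable def imageCoalgebra : Coalgebra H :=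
  ⟨F.I, (imageCoalgebra_commSq w F).lift⟩

noncomputable def toImageCoalgebra : R ⟶ imageCoalgebra w F :=
  ⟨F.e, (imageCoalgebra_commSq w F).fac_left.symm⟩

end Coalgebra

theorem IsStrictInitial.of_hom {X Y : C} (hY : IsStrictInitial Y) (f : X ⟶ Y) :
    IsStrictInitial X := by
  have : IsIso f := hY.2 X f
  refine ⟨⟨hY.1.some.ofIso (asIso f).symm⟩, fun Z g => ?_⟩
  have : IsIso (g ≫ f) := hY.2 Z (g ≫ f)
  exact IsIso.of_isIso_comp_right g f

theorem isLFGCoalgebra_of_isFG {H : C ⥤ C} {X : Endofunctor.Coalgebra H} (hX : IsFG X.V) :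
    IsLFGCoalgebra H X :=
  fun _ _ f => ⟨X, 𝟙 X, f, hX, Category.comp_id f⟩

end LFF

open LFF in
theorem stmt13_general {C : Type u} [Category.{v} C] (hC : IsLFP C)
    (H : C ⥤ C) (hm : PreservesNonemptyMonos H)
    (L : Endofunctor.Coalgebra H) (hLlfg : IsLFGCoalgebra H L)
    (hLfinal : ∀ X : Endofunctor.Coalgebra H, IsLFGCoalgebra H X → ∃! _ : X ⟶ L, True)
    (T : Endofunctor.Coalgebra H) (hT : IsTerminal T) :
    Mono (hT.from L).f := by
  have := hC.1
  have := hC.hasStrongEpiMonoFactorisations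
  rw [hC.isSeparating.mono_iff]
  intro S hS a b hab
  by_cases hSi : IsStrictInitial S
  · exact hSi.1.some.hom_ext a b
  obtain ⟨P, h, p, hP, hp⟩ := hLlfg (S ⨿ S) (hS.coprod hS).isFG (coprod.desc a b)
  let F := (HasStrongEpiMonoFactorisations.has_fac (h ≫ hT.from L).f).some
  have : Mono (H.map F.m) :=
    hm F.m F.m_mono fun hI => hSi (hI.of_hom (coprod.inl ≫ p ≫ F.e))
  have hE : IsFG F.I := hP.of_strongEpi hC.isSeparating F.e
  obtain ⟨q, -, -⟩ := hLfinal (imageCoalgebra _ F) (isLFGCoalgebra_of_isFG hE)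
  have hfac : toImageCoalgebra _ F ≫ q = h :=
    (hLfinal P (isLFGCoalgebra_of_isFG hP)).unique trivial trivial
  have hpe : coprod.inl ≫ p ≫ (toImageCoalgebra _ F).f =
      coprod.inr ≫ p ≫ (toImageCoalgebra _ F).f := by
    change coprod.inl ≫ p ≫ F.e = coprod.inr ≫ p ≫ F.e
    rw [← cancel_mono F.m]
    simp only [Category.assoc, F.fac, Endofunctor.Coalgebra.comp_f, reassoc_of% hp,
      coprod.inl_desc_assoc, coprod.inr_desc_assoc, hab]
  have ha : a = coprod.inl ≫ p ≫ h.f := by rw [hp, coprod.inl_desc]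
  have hb : b = coprod.inr ≫ p ≫ h.f := by rw [hp, coprod.inr_desc]
  rw [ha, hb, ← hfac, Endofunctor.Coalgebra.comp_f, reassoc_of% hpe]

open LFF in
/-- The final lfg coalgebra is a subcoalgebra of the final coalgebra: the unique
homomorphism from the final lfg coalgebra into the final coalgebra is monic. -/
theorem stmt13 {C : Type u} [Category.{v} C] (hC : IsLFP C)
    (H : C ⥤ C) (hfin : IsFinitary H) (hm : PreservesNonemptyMonos H)
    (L : Endofunctor.Coalgebra H) (hLlfg : IsLFGCoalgebra H L)
    (hLfinal : ∀ X : Endofunctor.Coalgebra H, IsLFGCoalgebra H X → ∃! _ : X ⟶ L, True)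
    (T : Endofunctor.Coalgebra H) (hT : IsTerminal T) :
    Mono (hT.from L).f :=
  stmt13_general hC H hm L hLlfg hLfinal T hT
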